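/- arXiv:2011.12815 — 2 statements merged into one kernel-verified Lean document; each statement's English description precedes it below -/
import Mathlib

section
/- Let v be a 2×2 real matrix and let v̄ be its vertically and horizontally flipped version, i.e., v̄[i,j] = v[3−i, 3−j] for i,j ∈ {1,2}. Let ξ be an n×n real matrix with n ≥ 2. Then the transposed convolution U_v(ξ) := v ⊛ (ξ ⊗ U), where U is the 2×2 matrix with a 1 in the top-left entry and zeros elsewhere, ⊗ is the Kronecker product, and ⊛ is the valid 2×2 correlation (v ⊛ x)[i,j] = Σ_{p=0}^{1} Σ_{q=0}^{1} x[i+p, j+q]·v[p,q] (with zero-padding), equals ξ ⊗ v̄. -/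
/-- Zero-padded access to a matrix with integer indices. -/
noncomputable def pad {m n : ℕ} (x : Matrix (Fin m) (Fin n) ℝ) (i j : ℤ) : ℝ :=
  if h : 0 ≤ i ∧ i < m ∧ 0 ≤ j ∧ j < n then
    x ⟨i.toNat, by omega⟩ ⟨j.toNat, by omega⟩ else 0

/-- Bed-of-nails upsampling `ξ ⊗ E₁₁`: the entry `ξ[i,j]` is placed at the
top-left position of the `(i,j)`-th 2×2 block, and all other entries are zero. -/
noncomputable def upsample {m n : ℕ} (x : Matrix (Fin m) (Fin n) ℝ) :
    Matrix (Fin (2 * m)) (Fin (2 * n)) ℝ :=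
  fun i j =>
    if (i : ℕ) % 2 = 0 ∧ (j : ℕ) % 2 = 0 then
      x ⟨(i : ℕ) / 2, by have := i.2; omega⟩ ⟨(j : ℕ) / 2, by have := j.2; omega⟩
    else 0

/-- Kronecker product `ξ ⊗ v` of an `m×n` matrix with a `2×2` matrix. -/
noncomputable def kron {m n : ℕ} (x : Matrix (Fin m) (Fin n) ℝ)
    (v : Matrix (Fin 2) (Fin 2) ℝ) : Matrix (Fin (2 * m)) (Fin (2 * n)) ℝ :=
  fun i j =>
    x ⟨(i : ℕ) / 2, by have := i.2; omega⟩ ⟨(j : ℕ) / 2, by have := j.2; omega⟩ *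
      v ⟨(i : ℕ) % 2, by omega⟩ ⟨(j : ℕ) % 2, by omega⟩

/-- Vertical and horizontal flip2 of a 2×2 kernel: `v̄[i,j] = v[3−i,3−j]` (1-based). -/
noncomputable def flip2 (v : Matrix (Fin 2) (Fin 2) ℝ) : Matrix (Fin 2) (Fin 2) ℝ :=
  fun i j => v ⟨1 - (i : ℕ), by omega⟩ ⟨1 - (j : ℕ), by omega⟩

/-- Zero-padded 2×2 correlation producing an output of the same size:
`(v ⊛ x)[i,j] = Σ_{p=0}^{1} Σ_{q=0}^{1} x[i+p, j+q]·v[p,q]` (1-based indexing of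
the zero-padded input, i.e., the input is padded by one zero row/column at the
top and left so that the output has the same size as the input). -/
noncomputable def corr2 {m n : ℕ} (v : Matrix (Fin 2) (Fin 2) ℝ)
    (x : Matrix (Fin m) (Fin n) ℝ) : Matrix (Fin m) (Fin n) ℝ :=
  fun i j => ∑ p : Fin 2, ∑ q : Fin 2,
    pad x ((i : ℤ) + (p : ℤ) - 1) ((j : ℤ) + (q : ℤ) - 1) * v p q

lemma pad_up_zero {m k : ℕ} (x : Matrix (Fin m) (Fin k) ℝ) (a b : ℤ)
    (h : ¬(a % 2 = 0 ∧ b % 2 = 0 ∧ 0 ≤ a ∧ a < 2*m ∧ 0 ≤ b ∧ b < 2*k)) :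
    pad (upsample x) a b = 0 := by
  unfold pad upsample
  split_ifs with h1 h2
  · exfalso; apply h
    simp only [Fin.val_mk] at h2 ⊢
    omega
  · rfl
  · rfl

lemma pad_up {m k : ℕ} (x : Matrix (Fin m) (Fin k) ℝ) (a b : ℤ)
    (i0 : Fin m) (j0 : Fin k) (ha : a = 2 * (i0 : ℤ)) (hb : b = 2 * (j0 : ℤ)) :
    pad (upsample x) a b = x i0 j0 := by
  have hi := i0.2; have hj := j0.2
  unfold pad upsample
  rw [dif_pos (by omega)]
  rw [if_pos (by constructor <;> simp only [Fin.val_mk] <;> omega)]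
  congr 1 <;> exact Fin.ext (by simp only [Fin.val_mk]; omega)

/-- The transposed convolution `U_v(ξ) := v ⊛ (ξ ⊗ E₁₁)` equals `ξ ⊗ v̄`. -/
theorem stmt0 (n : ℕ) (hn : 2 ≤ n) (v : Matrix (Fin 2) (Fin 2) ℝ)
    (ξ : Matrix (Fin n) (Fin n) ℝ) :
    corr2 v (upsample ξ) = kron ξ (flip2 v) := by
  ext i j
  have hi2 := i.2
  have hj2 := j.2
  simp only [corr2, kron, flip2, Fin.sum_univ_two, Fin.val_zero, Fin.val_one]
  push_cast
  rcases Nat.mod_two_eq_zero_or_one (i : ℕ) with hi | hi <;>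
    rcases Nat.mod_two_eq_zero_or_one (j : ℕ) with hj | hj
  · rw [pad_up_zero ξ ((i:ℤ) + 0 - 1) ((j:ℤ) + 0 - 1) (by omega)]
    rw [pad_up_zero ξ ((i:ℤ) + 0 - 1) ((j:ℤ) + 1 - 1) (by omega)]
    rw [pad_up_zero ξ ((i:ℤ) + 1 - 1) ((j:ℤ) + 0 - 1) (by omega)]
    rw [pad_up ξ ((i:ℤ) + 1 - 1) ((j:ℤ) + 1 - 1) ⟨(i:ℕ)/2, by omega⟩ ⟨(j:ℕ)/2, by omega⟩ (by push_cast; omega) (by push_cast; omega)]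
    simp [hi, hj]
  · rw [pad_up_zero ξ ((i:ℤ) + 0 - 1) ((j:ℤ) + 0 - 1) (by omega)]
    rw [pad_up_zero ξ ((i:ℤ) + 0 - 1) ((j:ℤ) + 1 - 1) (by omega)]
    rw [pad_up_zero ξ ((i:ℤ) + 1 - 1) ((j:ℤ) + 1 - 1) (by omega)]
    rw [pad_up ξ ((i:ℤ) + 1 - 1) ((j:ℤ) + 0 - 1) ⟨(i:ℕ)/2, by omega⟩ ⟨(j:ℕ)/2, by omega⟩ (by push_cast; omega) (by push_cast; omega)]
    simp [hi, hj]
  · rw [pad_up_zero ξ ((i:ℤ) + 0 - 1) ((j:ℤ) + 0 - 1) (by omega)]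
    rw [pad_up_zero ξ ((i:ℤ) + 1 - 1) ((j:ℤ) + 0 - 1) (by omega)]
    rw [pad_up_zero ξ ((i:ℤ) + 1 - 1) ((j:ℤ) + 1 - 1) (by omega)]
    rw [pad_up ξ ((i:ℤ) + 0 - 1) ((j:ℤ) + 1 - 1) ⟨(i:ℕ)/2, by omega⟩ ⟨(j:ℕ)/2, by omega⟩ (by push_cast; omega) (by push_cast; omega)]
    simp [hi, hj]
  · rw [pad_up_zero ξ ((i:ℤ) + 0 - 1) ((j:ℤ) + 1 - 1) (by omega)]
    rw [pad_up_zero ξ ((i:ℤ) + 1 - 1) ((j:ℤ) + 0 - 1) (by omega)]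
    rw [pad_up_zero ξ ((i:ℤ) + 1 - 1) ((j:ℤ) + 1 - 1) (by omega)]
    rw [pad_up ξ ((i:ℤ) + 0 - 1) ((j:ℤ) + 0 - 1) ⟨(i:ℕ)/2, by omega⟩ ⟨(j:ℕ)/2, by omega⟩ (by push_cast; omega) (by push_cast; omega)]
    simp [hi, hj]
end

section
/- One step of the nonnegative ISTA iteration S(α) = σ(α + ηDᵀ(z − Dα) − ηλ1) with 0 < η ≤ 1/‖D‖²_{op} does not increase the objective F(α) = ½‖z − Dα‖₂² + λΣᵢαᵢ + ι_{α≥0}(α): for every α ≥ 0, F(S(α)) ≤ F(α). -/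
/-- One nonnegative ISTA step with `0 < η ≤ 1/‖D‖²` maps into the nonnegative
orthant and does not increase the objective
`F(α) = ½‖z − Dα‖₂² + λΣᵢαᵢ + ι_{α≥0}(α)`. -/
theorem stmt11 (d N : ℕ)
    (D : EuclideanSpace ℝ (Fin N) →L[ℝ] EuclideanSpace ℝ (Fin d))
    (z : EuclideanSpace ℝ (Fin d)) (lam η : ℝ) (hlam : 0 < lam) (hη : 0 < η)
    (hη' : η ≤ 1 / ‖D‖ ^ 2)
    (α : EuclideanSpace ℝ (Fin N)) (hα : ∀ i, 0 ≤ α i) :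
    let F : EuclideanSpace ℝ (Fin N) → ℝ :=
      fun β => (1 / 2) * ‖z - D β‖ ^ 2 + lam * ∑ i, β i
    let Sα : EuclideanSpace ℝ (Fin N) :=
      WithLp.toLp 2 (fun i =>
        max (α i + η * (ContinuousLinearMap.adjoint D (z - D α)) i - η * lam) 0)
    (∀ i, 0 ≤ Sα i) ∧ F Sα ≤ F α := by
  intro F Sα
  set g : EuclideanSpace ℝ (Fin N) := ContinuousLinearMap.adjoint D (z - D α) with hg
  have hS : ∀ i, 0 ≤ Sα i := fun i => le_max_right _ _
  refine ⟨hS, ?_⟩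
  set u : EuclideanSpace ℝ (Fin N) := Sα - α with hu
  have hui : ∀ i, u i = Sα i - α i := fun i => rfl
  -- pointwise key inequality
  have key : ∀ i, u i ^ 2 + η * lam * u i - η * (g i * u i) ≤ 0 := by
    intro i
    rcases le_or_gt 0 (α i + η * g i - η * lam) with h | h
    · have hs : Sα i = α i + η * g i - η * lam := max_eq_left h
      have hueq : u i = η * g i - η * lam := by rw [hui, hs]; ring
      have : u i ^ 2 + η * lam * u i - η * (g i * u i) = 0 := by rw [hueq]; ring
      linarith
    · have hs : Sα i = 0 := max_eq_right h.le
      have hueq : u i = -α i := by rw [hui, hs]; ring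
      nlinarith [hα i, hueq, h]
  have hsum : (∑ i, u i ^ 2) + η * lam * (∑ i, u i) - η * (∑ i, g i * u i) ≤ 0 := by
    have := Finset.sum_nonpos (s := Finset.univ) (fun i _ => key i)
    simpa [Finset.sum_sub_distrib, Finset.sum_add_distrib, Finset.mul_sum] using this
  -- identify sums with inner products / norms
  have hn2 : ‖u‖ ^ 2 = ∑ i, u i ^ 2 := by
    rw [← real_inner_self_eq_norm_sq, PiLp.inner_apply]
    simp [RCLike.inner_apply, sq]
  have hip : (∑ i, g i * u i) = inner ℝ (z - D α) (D u) := by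
    rw [← ContinuousLinearMap.adjoint_inner_left, PiLp.inner_apply]
    simp [RCLike.inner_apply, hg]
    exact Finset.sum_congr rfl (fun x _ => mul_comm _ _)
  -- norm expansion
  have hSa : Sα = α + u := by rw [hu]; abel
  have hzD : z - D Sα = (z - D α) - D u := by
    rw [hSa, map_add]; abel
  have hexp : ‖z - D Sα‖ ^ 2
      = ‖z - D α‖ ^ 2 - 2 * inner ℝ (z - D α) (D u) + ‖D u‖ ^ 2 := by
    rw [hzD]; exact norm_sub_sq_real _ _
  -- sum splitting
  have hsumS : (∑ i, Sα i) = (∑ i, α i) + ∑ i, u i := by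
    rw [hSa]; simp [Finset.sum_add_distrib]
  -- step-size bound
  have hDnn : (0:ℝ) ≤ ‖D‖ ^ 2 := sq_nonneg _
  have hD2 : η * ‖D‖ ^ 2 ≤ 1 := by
    rcases eq_or_lt_of_le hDnn with h0 | h0
    · rw [← h0]; simp
    · exact (le_div_iff₀ h0).mp hη'
  have hDu : ‖D u‖ ^ 2 ≤ ‖D‖ ^ 2 * ‖u‖ ^ 2 := by
    have h1 := D.le_opNorm u
    have h2 : (0:ℝ) ≤ ‖D u‖ := norm_nonneg _
    nlinarith [norm_nonneg u, norm_nonneg D]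
  have hun2 : (0:ℝ) ≤ ‖u‖ ^ 2 := sq_nonneg _
  have hB : η * ‖D u‖ ^ 2 ≤ ‖u‖ ^ 2 := by nlinarith
  set U := ∑ i, u i
  set ip : ℝ := inner ℝ (z - D α) (D u)
  rw [hn2] at hB
  rw [hip, ← hn2] at hsum
  have h1 : η * (lam * U - ip + ‖D u‖ ^ 2 / 2) ≤ η * 0 := by
    have e : η * (lam * U - ip + ‖D u‖ ^ 2 / 2)
        = η * lam * U - η * ip + (η * ‖D u‖ ^ 2) / 2 := by ring
    rw [e, mul_zero]
    linarith [hsum, hB, hun2]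
  have h2 : lam * U - ip + ‖D u‖ ^ 2 / 2 ≤ 0 := le_of_mul_le_mul_left h1 hη
  show (1 / 2) * ‖z - D Sα‖ ^ 2 + lam * ∑ i, Sα i
      ≤ (1 / 2) * ‖z - D α‖ ^ 2 + lam * ∑ i, α i
  rw [hexp, hsumS]
  have e2 : (1 / 2) * (‖z - D α‖ ^ 2 - 2 * ip + ‖D u‖ ^ 2) + lam * ((∑ i, α i) + U)
      = (1 / 2) * ‖z - D α‖ ^ 2 + lam * (∑ i, α i) + (lam * U - ip + ‖D u‖ ^ 2 / 2) := by
    ring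
  rw [e2]
  linarith [h2]
end
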